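/- For x > 0 and a loan α, the following are equivalent: (a) the linear span of S_x ∪ {α} contains no arbitrage; (b) α ∈ S_x; (c) −α(0) = Σ_{k≥1} α(k)/(1 + xk). In other words, S_x is saturated: adjoining any loan not in S_x creates an arbitrage. -/

import Mathlib

/-- The elementary loan `-1 + (1+mx)·yᵐ` of maturity `m`, simple interest rate `x`. -/
noncomputable def elemLoan (x : ℝ) (m : ℕ) : Polynomial ℝ :=
  Polynomial.C (1 + m * x) * Polynomial.X ^ m - 1

/-- The convex cone generated by the elementary loans of simple interest rate `x`:
the set of conical combinations of the `elemLoan x m`, `m ≥ 1`. -/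
noncomputable def Sx (x : ℝ) : Set (Polynomial ℝ) :=
  {α | ∃ (n : ℕ) (c : Fin n → ℝ) (m : Fin n → ℕ), 0 < n ∧ (∀ k, 0 < c k) ∧ (∀ k, 1 ≤ m k) ∧
    α = ∑ k, c k • elemLoan x (m k)}

/-- An arbitrage: a nonzero transaction with zero payment at time 0 and positive net gain. -/
def IsArbitrage (β : Polynomial ℝ) : Prop :=
  β ≠ 0 ∧ β.coeff 0 = 0 ∧ (∀ k ≥ 1, 0 ≤ β.coeff k) ∧
    0 < ∑ k ∈ Finset.Icc 1 β.natDegree, β.coeff k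

/-- A loan: negative principal at time 0, nonnegative installments whose sum is at
least the principal. -/
def IsLoan (α : Polynomial ℝ) : Prop :=
  α.coeff 0 < 0 ∧ (∀ k ≥ 1, 0 ≤ α.coeff k) ∧
    -α.coeff 0 ≤ ∑ k ∈ Finset.Icc 1 α.natDegree, α.coeff k


/-!
The present value `p ↦ Σₖ p(k) / (1 + x k)` is a linear functional that vanishes on every
elementary loan, hence on the span of `S_x`, and is positive on every arbitrage. Conversely,
`p - Σₖ (p(k) / (1 + x k)) • b_k` is the constant polynomial equal to the present value of `p`,
so the kernel of the present value is the span of the elementary loans, and a loan in that kernel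
is a positive combination of them, i.e. lies in `S_x`. A loan outside this hyperplane spans,
together with it, the whole space, which contains the arbitrage `y`.
-/

open Polynomial

noncomputable def presentValue (x : ℝ) : ℝ[X] →ₗ[ℝ] ℝ :=
  lsum fun k => (1 / (1 + x * k)) • LinearMap.id

lemma one_add_mul_natCast_pos {x : ℝ} (hx : 0 ≤ x) (k : ℕ) : 0 < 1 + x * k := by
  positivity

lemma presentValue_monomial (x : ℝ) (k : ℕ) (a : ℝ) :
    presentValue x (monomial k a) = a / (1 + x * k) := by
  rw [presentValue, lsum_apply, sum_monomial_index] <;> simp [div_eq_inv_mul]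

lemma presentValue_eq_coeff_zero_add_sum (x : ℝ) (p : ℝ[X]) :
    presentValue x p = p.coeff 0 + ∑ k ∈ Finset.Icc 1 p.natDegree, p.coeff k / (1 + x * k) := by
  rw [presentValue, lsum_apply, p.sum_over_range' (by simp) _ (Nat.lt_add_one _),
    Finset.range_eq_Ico, Finset.sum_eq_sum_Ico_succ_bot p.natDegree.add_one_pos, zero_add,
    Finset.Ico_add_one_right_eq_Icc]
  simp [div_eq_inv_mul]

lemma elemLoan_zero (x : ℝ) : elemLoan x 0 = 0 := by
  simp [elemLoan]

lemma smul_elemLoan {x : ℝ} (hx : 0 ≤ x) (k : ℕ) (a : ℝ) :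
    (a / (1 + x * k)) • elemLoan x k = monomial k a - C (a / (1 + x * k)) := by
  have hk := (one_add_mul_natCast_pos hx k).ne'
  rw [elemLoan, C_mul_X_pow_eq_monomial, smul_sub, smul_monomial, smul_eq_mul,
    ← C_1, smul_C, smul_eq_mul, mul_one, mul_comm (k : ℝ) x, div_mul_cancel₀ a hk]

lemma presentValue_elemLoan {x : ℝ} (hx : 0 ≤ x) (m : ℕ) :
    presentValue x (elemLoan x m) = 0 := by
  have hm := (one_add_mul_natCast_pos hx m).ne'
  rw [elemLoan, C_mul_X_pow_eq_monomial, ← C_1, ← monomial_zero_left, map_sub,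
    presentValue_monomial, presentValue_monomial, mul_comm (m : ℝ) x, div_self hm]
  simp

lemma eq_C_presentValue_add_sum_smul_elemLoan {x : ℝ} (hx : 0 ≤ x) (p : ℝ[X]) :
    p = C (presentValue x p) + ∑ k ∈ p.support, (p.coeff k / (1 + x * k)) • elemLoan x k := by
  simp only [smul_elemLoan hx, Finset.sum_sub_distrib, ← p.as_sum_support, ← map_sum]
  rw [presentValue, lsum_apply, sum_def]
  simp [div_eq_inv_mul]

lemma elemLoan_mem_Sx (x : ℝ) {m : ℕ} (hm : 1 ≤ m) : elemLoan x m ∈ Sx x :=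
  ⟨1, fun _ => 1, fun _ => m, one_pos, fun _ => one_pos, fun _ => hm, by simp⟩

lemma sum_smul_elemLoan_mem_Sx (x : ℝ) {T : Finset ℕ} (hT : T.Nonempty) {c : ℕ → ℝ}
    (hc : ∀ k ∈ T, 0 < c k) (hT1 : ∀ k ∈ T, 1 ≤ k) :
    ∑ k ∈ T, c k • elemLoan x k ∈ Sx x := by
  refine ⟨T.card, fun i => c (T.equivFin.symm i), fun i => T.equivFin.symm i, hT.card_pos,
    fun i => hc _ (T.equivFin.symm i).2, fun i => hT1 _ (T.equivFin.symm i).2, ?_⟩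
  rw [← Finset.sum_coe_sort T]
  exact (T.equivFin.symm.sum_comp fun k : T => c k • elemLoan x k).symm

lemma Sx_subset_ker_presentValue {x : ℝ} (hx : 0 ≤ x) :
    Sx x ⊆ LinearMap.ker (presentValue x) := by
  rintro _ ⟨n, c, m, -, -, -, rfl⟩
  simp [LinearMap.mem_ker, presentValue_elemLoan hx]

lemma ker_presentValue_le_span_Sx {x : ℝ} (hx : 0 ≤ x) :
    LinearMap.ker (presentValue x) ≤ Submodule.span ℝ (Sx x) := by
  intro p hp
  rw [eq_C_presentValue_add_sum_smul_elemLoan hx p, LinearMap.mem_ker.mp hp, C_0, zero_add]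
  refine Submodule.sum_mem _ fun k _ => Submodule.smul_mem _ _ ?_
  rcases Nat.eq_zero_or_pos k with rfl | hk
  · rw [elemLoan_zero]
    exact Submodule.zero_mem _
  · exact Submodule.subset_span (elemLoan_mem_Sx x hk)

lemma mem_Sx_of_presentValue_eq_zero {x : ℝ} (hx : 0 ≤ x) {p : ℝ[X]} (hp : p ≠ 0)
    (hcoeff : ∀ k ≥ 1, 0 ≤ p.coeff k) (h : presentValue x p = 0) : p ∈ Sx x := by
  have hrepr := eq_C_presentValue_add_sum_smul_elemLoan hx p
  rw [h, C_0, zero_add, ← Finset.sum_erase _ (by rw [elemLoan_zero, smul_zero])] at hrepr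
  have hT1 : ∀ k ∈ p.support.erase 0, 1 ≤ k := fun k hk =>
    Nat.one_le_iff_ne_zero.mpr (Finset.ne_of_mem_erase hk)
  have hT : (p.support.erase 0).Nonempty := by
    refine Finset.nonempty_iff_ne_empty.mpr fun hT => hp ?_
    rw [hrepr, hT, Finset.sum_empty]
  rw [hrepr]
  have hpos : ∀ k ∈ p.support.erase 0, 0 < p.coeff k / (1 + x * k) := fun k hk =>
    div_pos ((hcoeff k (hT1 k hk)).lt_of_ne' (mem_support_iff.mp (Finset.mem_of_mem_erase hk)))
      (one_add_mul_natCast_pos hx k)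
  exact sum_smul_elemLoan_mem_Sx x hT hpos hT1

lemma span_Sx_union_singleton_le_ker {x : ℝ} (hx : 0 ≤ x) {α : ℝ[X]} (hα : α ∈ Sx x) :
    Submodule.span ℝ (Sx x ∪ {α}) ≤ LinearMap.ker (presentValue x) :=
  Submodule.span_le.mpr <| Set.union_subset (Sx_subset_ker_presentValue hx)
    (Set.singleton_subset_iff.mpr (Sx_subset_ker_presentValue hx hα))

lemma span_Sx_union_singleton_eq_top {x : ℝ} (hx : 0 ≤ x) {α : ℝ[X]}
    (hα : presentValue x α ≠ 0) : Submodule.span ℝ (Sx x ∪ {α}) = ⊤ := by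
  refine Submodule.eq_top_iff'.mpr fun p => ?_
  set t := presentValue x p / presentValue x α
  have hker : p - t • α ∈ LinearMap.ker (presentValue x) := by
    simp [LinearMap.mem_ker, t, div_mul_cancel₀ _ hα]
  rw [← sub_add_cancel p (t • α)]
  refine Submodule.add_mem _ ?_ (Submodule.smul_mem _ _ (Submodule.subset_span (Or.inr rfl)))
  exact Submodule.span_mono Set.subset_union_left (ker_presentValue_le_span_Sx hx hker)

lemma isArbitrage_X : IsArbitrage (X : ℝ[X]) := by
  refine ⟨X_ne_zero, coeff_X_zero, fun k _ => ?_, ?_⟩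
  · rw [coeff_X]
    split_ifs <;> norm_num
  · simp

lemma presentValue_pos_of_isArbitrage {x : ℝ} (hx : 0 ≤ x) {γ : ℝ[X]}
    (hγ : IsArbitrage γ) : 0 < presentValue x γ := by
  obtain ⟨-, hγ0, hcoeff, hsum⟩ := hγ
  rw [presentValue_eq_coeff_zero_add_sum, hγ0, zero_add]
  obtain ⟨k, hk, hpos⟩ :=
    Finset.exists_lt_of_sum_lt (f := fun _ => (0 : ℝ)) (by simpa using hsum)
  refine Finset.sum_pos' (fun i hi => div_nonneg (hcoeff i (Finset.mem_Icc.mp hi).1)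
    (one_add_mul_natCast_pos hx i).le) ⟨k, hk, div_pos hpos (one_add_mul_natCast_pos hx k)⟩

theorem sx_saturated (x : ℝ) (hx : 0 < x) (α : Polynomial ℝ) (hα : IsLoan α) :
    ((∀ γ ∈ Submodule.span ℝ (Sx x ∪ {α}), ¬ IsArbitrage γ) ↔ α ∈ Sx x) ∧
    (α ∈ Sx x ↔ -α.coeff 0 = ∑ k ∈ Finset.Icc 1 α.natDegree, α.coeff k / (1 + x * k)) := by
  obtain ⟨hα0, hcoeff, -⟩ := hα
  have hne : α ≠ 0 := fun h => by simp [h] at hα0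
  have hmem : α ∈ Sx x ↔ presentValue x α = 0 :=
    ⟨fun h => Sx_subset_ker_presentValue hx.le h,
      mem_Sx_of_presentValue_eq_zero hx.le hne hcoeff⟩
  have hvalue : presentValue x α = 0 ↔
      -α.coeff 0 = ∑ k ∈ Finset.Icc 1 α.natDegree, α.coeff k / (1 + x * k) := by
    rw [presentValue_eq_coeff_zero_add_sum]
    constructor <;> intro h <;> linarith
  refine ⟨⟨fun hno => ?_, fun hα γ hγ hγarb => ?_⟩, hmem.trans hvalue⟩
  · refine hmem.mpr (by_contra fun hpv => hno X ?_ isArbitrage_X)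
    rw [span_Sx_union_singleton_eq_top hx.le hpv]
    exact Submodule.mem_top
  · exact (presentValue_pos_of_isArbitrage hx.le hγarb).ne'
      (span_Sx_union_singleton_le_ker hx.le hα hγ)
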